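/- arXiv:2207.09016 — 8 statements merged into one kernel-verified Lean document; each statement's English description precedes it below -/
import Mathlib

section
/- Let 𝒳 be a finite nonempty set, P a probability measure on 𝒳 × {0,1} × {0,1} with P(X=x, A=a, Y=y) > 0 for all x, a, y, and set ρ = P(Y=1). Let ω ∈ (0,1) and define Q by Q({(x,a,1)}) = ω · P(X=x, A=a | Y=1) and Q({(x,a,0)}) = (1−ω) · P(X=x, A=a | Y=0). Then for every x ∈ 𝒳 and a ∈ {0,1}, the target-population regression function is partially identified from Q and ρ by Bayes' rule: P(Y=1 | X=x, A=a) = [Q(X=x, A=a | Y=1) · ρ] / [Q(X=x, A=a | Y=1) · ρ + Q(X=x, A=a | Y=0) · (1−ρ)]. -/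
open Finset

/-! Under outcome-dependent sampling `Q(x, a, y)` is `P(x, a, y)` rescaled by the factor
`Q(Y = y) / P(Y = y)`, and `Q(Y = y)` is the sampled outcome rate. Undoing the rescaling with
`ρ = P(Y = 1)` and `1 - ρ = P(Y = 0)` recovers the joint masses `P(x, a, 1)` and `P(x, a, 0)`,
whose normalised ratio is the target regression function. -/

section OutcomeMass

variable {𝒳 K : Type*} [Fintype 𝒳]

/-- The marginal mass `P(Y = y)` of a weight function on `𝒳 × {0,1} × {0,1}`. -/
def outcomeMass [AddCommMonoid K] (P : 𝒳 × Bool × Bool → K) (y : Bool) : K :=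
  ∑ x, ∑ a, P (x, a, y)

theorem sum_eq_outcomeMass_true_add_false [AddCommMonoid K] (P : 𝒳 × Bool × Bool → K) :
    ∑ z, P z = outcomeMass P true + outcomeMass P false := by
  simp only [outcomeMass, Fintype.sum_prod_type, Fintype.sum_bool, sum_add_distrib]

theorem outcomeMass_pos [Nonempty 𝒳] [AddCommMonoid K] [PartialOrder K]
    [IsOrderedCancelAddMonoid K] {P : 𝒳 × Bool × Bool → K} (hP : ∀ z, 0 < P z) (y : Bool) :
    0 < outcomeMass P y :=
  sum_pos (fun _ _ => sum_pos (fun _ _ => hP _) univ_nonempty) univ_nonempty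

variable [Field K]

theorem outcomeMass_eq_of_eq_mul_div {P Q : 𝒳 × Bool × Bool → K} {y : Bool} {c : K}
    (hP : outcomeMass P y ≠ 0)
    (hQ : ∀ x a, Q (x, a, y) = c * (P (x, a, y) / outcomeMass P y)) :
    outcomeMass Q y = c := by
  simp only [outcomeMass, hQ, ← mul_sum, ← sum_div] at hP ⊢
  rw [div_self hP, mul_one]

theorem bayes_inversion {P Q : 𝒳 × Bool × Bool → K} {ω : K}
    (hP1 : outcomeMass P true ≠ 0) (hP0 : outcomeMass P false ≠ 0) (hω0 : ω ≠ 0) (hω1 : 1 - ω ≠ 0)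
    (hQ1 : ∀ x a, Q (x, a, true) = ω * (P (x, a, true) / outcomeMass P true))
    (hQ0 : ∀ x a, Q (x, a, false) = (1 - ω) * (P (x, a, false) / outcomeMass P false))
    (x : 𝒳) (a : Bool) :
    P (x, a, true) / (P (x, a, true) + P (x, a, false)) =
      Q (x, a, true) / outcomeMass Q true * outcomeMass P true /
        (Q (x, a, true) / outcomeMass Q true * outcomeMass P true +
          Q (x, a, false) / outcomeMass Q false * outcomeMass P false) := by
  have unscale : ∀ {c p S : K}, c ≠ 0 → S ≠ 0 → c * (p / S) / c * S = p := by
    intro c p S hc hS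
    field_simp
  rw [outcomeMass_eq_of_eq_mul_div hP1 hQ1, outcomeMass_eq_of_eq_mul_div hP0 hQ0, hQ1, hQ0,
    unscale hω0 hP1, unscale hω1 hP0]

end OutcomeMass

/-- Let `P` be a probability measure on `𝒳 × {0,1} × {0,1}` (coordinates `(X,A,Y)`,
`true = 1`, `false = 0`) with positive mass everywhere, let `ρ = P(Y=1)`, and let `Q` be the
outcome-dependent sampling distribution with sampled outcome rate `ω ∈ (0,1)`:
`Q({(x,a,1)}) = ω · P(X=x,A=a | Y=1)` and `Q({(x,a,0)}) = (1−ω) · P(X=x,A=a | Y=0)`.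
Then Bayes' rule partially identifies the target regression function from `Q` and `ρ`:
`P(Y=1 | X=x, A=a) = Q(X=x,A=a | Y=1)·ρ / (Q(X=x,A=a | Y=1)·ρ + Q(X=x,A=a | Y=0)·(1−ρ))`. -/
theorem bayes_partial_identification_of_regression
    {𝒳 : Type*} [Fintype 𝒳] [Nonempty 𝒳]
    (P Q : 𝒳 × Bool × Bool → ℝ) (ω ρ : ℝ)
    (hPsum : ∑ z : 𝒳 × Bool × Bool, P z = 1)
    (hPpos : ∀ z, 0 < P z)
    (hρ : ρ = ∑ x : 𝒳, ∑ a : Bool, P (x, a, true))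
    (hω : ω ∈ Set.Ioo (0 : ℝ) 1)
    (hQ1 : ∀ x a, Q (x, a, true) =
      ω * (P (x, a, true) / ∑ x' : 𝒳, ∑ a' : Bool, P (x', a', true)))
    (hQ0 : ∀ x a, Q (x, a, false) =
      (1 - ω) * (P (x, a, false) / ∑ x' : 𝒳, ∑ a' : Bool, P (x', a', false))) :
    ∀ (x : 𝒳) (a : Bool),
      P (x, a, true) / (P (x, a, true) + P (x, a, false)) =
      (Q (x, a, true) / (∑ x' : 𝒳, ∑ a' : Bool, Q (x', a', true)) * ρ) /
        (Q (x, a, true) / (∑ x' : 𝒳, ∑ a' : Bool, Q (x', a', true)) * ρ +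
          Q (x, a, false) / (∑ x' : 𝒳, ∑ a' : Bool, Q (x', a', false)) * (1 - ρ)) := by
  have hρ' : ρ = outcomeMass P true := hρ
  have h1ρ : 1 - ρ = outcomeMass P false := by
    rw [hρ', ← hPsum, sum_eq_outcomeMass_true_add_false]
    ring
  rw [h1ρ, hρ']
  exact bayes_inversion (outcomeMass_pos hPpos true).ne' (outcomeMass_pos hPpos false).ne'
    hω.1.ne' (sub_ne_zero.mpr hω.2.ne') hQ1 hQ0
end

section
/- Let 𝒳 be a finite nonempty set, P a probability measure on 𝒳 × {0,1} × {0,1} with P(X=x, A=a, Y=y) > 0 for all x, a, y, and set ρ = P(Y=1). Let ω ∈ (0,1) and define Q by Q({(x,a,1)}) = ω · P(X=x, A=a | Y=1) and Q({(x,a,0)}) = (1−ω) · P(X=x, A=a | Y=0). Then the arithmetic aggregated odds ratio of the target population is partially identified as a function of ρ: E_P[OR_P(X)] = ρ · E_Q[OR_Q(X) | Y=1] + (1−ρ) · E_Q[OR_Q(X) | Y=0], where OR_M(x) = [M(Y=1|A=1,X=x)/M(Y=0|A=1,X=x)] / [M(Y=1|A=0,X=x)/M(Y=0|A=0,X=x)]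 for a measure M. -/
/-!
Outcome-dependent sampling multiplies the slice `Y = y` of `P` by a positive constant `c y`.
The conditional odds ratio at `x` is the cross-ratio `P(x,1,1) P(x,0,0) / (P(x,1,0) P(x,0,1))`, in
which these constants cancel, so `OR_Q = OR_P`; and the conditional law of `X` given `Y = y` is the
same under `Q` as under `P`. The identity is then the law of total expectation over `Y` under `P`.
-/

open Finset

/-- Conditional odds ratio of a data distribution `M` on `𝒳 × {0,1} × {0,1}` at covariate value
`x` (coordinates `(X, A, Y)`, `true = 1`, `false = 0`):
`OR_M(x) = [M(Y=1|A=1,X=x)/M(Y=0|A=1,X=x)] / [M(Y=1|A=0,X=x)/M(Y=0|A=0,X=x)]`. -/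
noncomputable def condOR {𝒳 : Type*} (M : 𝒳 × Bool × Bool → ℝ) (x : 𝒳) : ℝ :=
  ((M (x, true, true) / (M (x, true, true) + M (x, true, false))) /
      (M (x, true, false) / (M (x, true, true) + M (x, true, false)))) /
    ((M (x, false, true) / (M (x, false, true) + M (x, false, false))) /
      (M (x, false, false) / (M (x, false, true) + M (x, false, false))))

section OutcomeDependentSampling

variable {𝒳 : Type*} (M : 𝒳 × Bool × Bool → ℝ)

theorem condOR_eq_of_pos (x : 𝒳) (hM : ∀ a y, 0 < M (x, a, y)) :
    condOR M x = (M (x, true, true) / M (x, true, false)) /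
      (M (x, false, true) / M (x, false, false)) := by
  have hs : ∀ a, M (x, a, true) + M (x, a, false) ≠ 0 := fun a =>
    (add_pos (hM a true) (hM a false)).ne'
  unfold condOR
  rw [div_div_div_cancel_right₀ (hs true), div_div_div_cancel_right₀ (hs false)]

theorem condOR_mul_outcome (c : Bool → ℝ) (hc : ∀ y, 0 < c y) (x : 𝒳)
    (hM : ∀ a y, 0 < M (x, a, y)) :
    condOR (fun z => c z.2.2 * M z) x = condOR M x := by
  rw [condOR_eq_of_pos _ x fun a y => mul_pos (hc y) (hM a y), condOR_eq_of_pos M x hM]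
  simp only [mul_div_mul_comm (c true), mul_div_mul_left _ _ (div_pos (hc true) (hc false)).ne']

variable [Fintype 𝒳]

/-- `E_M[f(X) | Y = y]`. -/
noncomputable def outcomeCondMean (f : 𝒳 → ℝ) (y : Bool) : ℝ :=
  (∑ x, (∑ a, M (x, a, y)) * f x) / ∑ x, ∑ a, M (x, a, y)

theorem outcomeCondMean_mul_outcome (c : Bool → ℝ) (f : 𝒳 → ℝ) {y : Bool} (hc : c y ≠ 0) :
    outcomeCondMean (fun z => c z.2.2 * M z) f y = outcomeCondMean M f y := by
  simp only [outcomeCondMean, ← mul_sum, mul_assoc]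
  exact mul_div_mul_left _ _ hc

theorem sum_eq_sum_outcome_true_add_false :
    ∑ z, M z = ∑ x, ∑ a, M (x, a, true) + ∑ x, ∑ a, M (x, a, false) := by
  simp only [Fintype.sum_prod_type, Fintype.sum_bool, sum_add_distrib]

theorem sum_mul_eq_add_outcomeCondMean (f : 𝒳 → ℝ)
    (h1 : ∑ x, ∑ a, M (x, a, true) ≠ 0) (h0 : ∑ x, ∑ a, M (x, a, false) ≠ 0) :
    ∑ x, (∑ a, ∑ y, M (x, a, y)) * f x =
      (∑ x, ∑ a, M (x, a, true)) * outcomeCondMean M f true +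
        (∑ x, ∑ a, M (x, a, false)) * outcomeCondMean M f false := by
  rw [outcomeCondMean, outcomeCondMean, mul_div_cancel₀ _ h1, mul_div_cancel₀ _ h0]
  simp only [Fintype.sum_bool, add_mul, sum_add_distrib]

end OutcomeDependentSampling

/-- With `P` a positive probability measure on `𝒳 × {0,1} × {0,1}`, `ρ = P(Y=1)`,
and `Q` the outcome-dependent sampling distribution with outcome rate `ω ∈ (0,1)`, the arithmetic
aggregated odds ratio of the target population is partially identified as a function of `ρ`:
`E_P[OR_P(X)] = ρ · E_Q[OR_Q(X) | Y=1] + (1−ρ) · E_Q[OR_Q(X) | Y=0]`. -/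
theorem arithmetic_odds_ratio_partial_identification
    {𝒳 : Type*} [Fintype 𝒳] [Nonempty 𝒳]
    (P Q : 𝒳 × Bool × Bool → ℝ) (ω ρ : ℝ)
    (hPsum : ∑ z : 𝒳 × Bool × Bool, P z = 1)
    (hPpos : ∀ z, 0 < P z)
    (hρ : ρ = ∑ x : 𝒳, ∑ a : Bool, P (x, a, true))
    (hω : ω ∈ Set.Ioo (0 : ℝ) 1)
    (hQ1 : ∀ x a, Q (x, a, true) =
      ω * (P (x, a, true) / ∑ x' : 𝒳, ∑ a' : Bool, P (x', a', true)))
    (hQ0 : ∀ x a, Q (x, a, false) =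
      (1 - ω) * (P (x, a, false) / ∑ x' : 𝒳, ∑ a' : Bool, P (x', a', false))) :
    (∑ x : 𝒳, (∑ a : Bool, ∑ y : Bool, P (x, a, y)) * condOR P x) =
      ρ * ((∑ x : 𝒳, (∑ a : Bool, Q (x, a, true)) * condOR Q x) /
            (∑ x : 𝒳, ∑ a : Bool, Q (x, a, true))) +
      (1 - ρ) * ((∑ x : 𝒳, (∑ a : Bool, Q (x, a, false)) * condOR Q x) /
            (∑ x : 𝒳, ∑ a : Bool, Q (x, a, false))) := by
  obtain ⟨hω0, hω1⟩ := hω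
  subst hρ
  set ρ₁ := ∑ x : 𝒳, ∑ a : Bool, P (x, a, true)
  set ρ₀ := ∑ x : 𝒳, ∑ a : Bool, P (x, a, false)
  have hρ₁ : 0 < ρ₁ := sum_pos (fun _ _ => sum_pos (fun _ _ => hPpos _) univ_nonempty) univ_nonempty
  have hρ₀ : 0 < ρ₀ := sum_pos (fun _ _ => sum_pos (fun _ _ => hPpos _) univ_nonempty) univ_nonempty
  have h1ρ : 1 - ρ₁ = ρ₀ := by rw [← hPsum, sum_eq_sum_outcome_true_add_false]; ring
  set c : Bool → ℝ := fun y => cond y (ω / ρ₁) ((1 - ω) / ρ₀)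
  have hc : ∀ y, 0 < c y := by
    rintro (_ | _)
    · exact div_pos (sub_pos.2 hω1) hρ₀
    · exact div_pos hω0 hρ₁
  have hQ : Q = fun z => c z.2.2 * P z := by
    funext ⟨x, a, y⟩
    cases y
    · rw [hQ0, ← mul_div_assoc, ← div_mul_eq_mul_div]; rfl
    · rw [hQ1, ← mul_div_assoc, ← div_mul_eq_mul_div]; rfl
  have hOR : condOR Q = condOR P :=
    funext fun x => hQ ▸ condOR_mul_outcome P c hc x fun _ _ => hPpos _
  rw [h1ρ, hOR]
  change _ = ρ₁ * outcomeCondMean Q (condOR P) true + ρ₀ * outcomeCondMean Q (condOR P) false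
  rw [hQ, outcomeCondMean_mul_outcome _ _ _ (hc true).ne',
    outcomeCondMean_mul_outcome _ _ _ (hc false).ne']
  exact sum_mul_eq_add_outcomeCondMean P _ hρ₁.ne' hρ₀.ne'
end

section
/- Let 𝒳 be a finite nonempty set, P a probability measure on 𝒳 × {0,1} × {0,1} with P(X=x, A=a, Y=y) > 0 for all x, a, y, and set ρ = P(Y=1). Let ω ∈ (0,1) and define Q by Q({(x,a,1)}) = ω · P(X=x, A=a | Y=1) and Q({(x,a,0)}) = (1−ω) · P(X=x, A=a | Y=0). Write μ_a(x) = Q(Y=1 | X=x, A=a) and logit(t) = log(t/(1−t)). Then the geometric aggregated odds ratio of the target population is partially identified as a function of ρ: exp(E_P[log OR_P(X)]) = exp( ρ · E_Q[logit(μ₁(X)) − logit(μ₀(X)) | Y=1] + (1−ρ) · E_Q[logit(μ₁(X)) − logit(μ₀(X)) | Y=0] ), where OR_P(x) = [P(Y=1|A=1,X=x)/P(Y=0|A=1,X=x)] / [P(Y=1|A=0,X=x)/P(Y=0|A=0,X=x)]. -/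
/-!
Outcome-dependent sampling multiplies every cell with outcome `y` by the same constant `c_y`,
so the conditional odds ratio, a cross ratio with each outcome appearing once in numerator and
denominator, is unchanged: `logit μ₁(x) - logit μ₀(x) = log OR_P(x)`. Rescaling the stratum
`Y = y` also leaves the conditional mean given `Y = y` unchanged, so the right-hand side is
`P(Y=1) E_P[log OR_P(X) | Y=1] + P(Y=0) E_P[log OR_P(X) | Y=0] = E_P[log OR_P(X)]`.
-/

open Finset

/-- `logit t = log (t / (1 - t))`. -/
noncomputable def logit (t : ℝ) : ℝ := Real.log (t / (1 - t))

/-- Regression function `μ_a(x) = M(Y=1 | X=x, A=a)`. -/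
noncomputable def mu {𝒳 : Type*} (M : 𝒳 × Bool × Bool → ℝ) (a : Bool) (x : 𝒳) : ℝ :=
  M (x, a, true) / (M (x, a, true) + M (x, a, false))

open Real

lemma logit_div_add {p q : ℝ} (hp : 0 < p) (hq : 0 < q) :
    logit (p / (p + q)) = log p - log q := by
  have hpq : p + q ≠ 0 := by positivity
  have hodds : p / (p + q) / (1 - p / (p + q)) = p / q := by
    rw [one_sub_div hpq, add_sub_cancel_left, div_div_div_cancel_right₀ hpq]
  rw [logit, hodds, log_div hp.ne' hq.ne']

section OddsRatio

variable {𝒳 : Type*}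

lemma logit_mu {M : 𝒳 × Bool × Bool → ℝ} {x : 𝒳} {a : Bool}
    (hM : ∀ y, 0 < M (x, a, y)) :
    logit (mu M a x) = log (M (x, a, true)) - log (M (x, a, false)) :=
  logit_div_add (hM true) (hM false)

lemma condOR_eq_cross_ratio {M : 𝒳 × Bool × Bool → ℝ} {x : 𝒳}
    (hM : ∀ a y, 0 < M (x, a, y)) :
    condOR M x = M (x, true, true) * M (x, false, false) /
      (M (x, true, false) * M (x, false, true)) := by
  have := hM true true; have := hM true false
  have := hM false true; have := hM false false
  unfold condOR
  field_simp

lemma log_condOR {M : 𝒳 × Bool × Bool → ℝ} {x : 𝒳} (hM : ∀ a y, 0 < M (x, a, y)) :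
    log (condOR M x) = logit (mu M true x) - logit (mu M false x) := by
  have := hM true true; have := hM true false
  have := hM false true; have := hM false false
  rw [condOR_eq_cross_ratio hM, logit_mu (hM true), logit_mu (hM false),
    log_div (by positivity) (by positivity), log_mul (by positivity) (by positivity),
    log_mul (by positivity) (by positivity)]
  ring

lemma condOR_of_outcome_scaling {P Q : 𝒳 × Bool × Bool → ℝ} {x : 𝒳} {c : Bool → ℝ}
    (hc : ∀ y, 0 < c y) (hP : ∀ a y, 0 < P (x, a, y))
    (hQ : ∀ a y, Q (x, a, y) = c y * P (x, a, y)) :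
    condOR Q x = condOR P x := by
  have hQpos : ∀ a y, 0 < Q (x, a, y) := fun a y => hQ a y ▸ mul_pos (hc y) (hP a y)
  have := hc true; have := hc false
  have := hP true true; have := hP true false
  have := hP false true; have := hP false false
  rw [condOR_eq_cross_ratio hQpos, condOR_eq_cross_ratio hP, hQ, hQ, hQ, hQ]
  field_simp

end OddsRatio

section ConditionalMean

variable {𝒳 𝒜 : Type*} [Fintype 𝒳] [Fintype 𝒜]

noncomputable def outcomeProb (M : 𝒳 × 𝒜 × Bool → ℝ) (y : Bool) : ℝ :=
  ∑ x, ∑ a, M (x, a, y)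

noncomputable def condMean (M : 𝒳 × 𝒜 × Bool → ℝ) (y : Bool) (f : 𝒳 → ℝ) : ℝ :=
  (∑ x, (∑ a, M (x, a, y)) * f x) / outcomeProb M y

lemma outcomeProb_pos [Nonempty 𝒳] [Nonempty 𝒜] {M : 𝒳 × 𝒜 × Bool → ℝ}
    (hM : ∀ z, 0 < M z) (y : Bool) : 0 < outcomeProb M y :=
  sum_pos (fun _ _ => sum_pos (fun _ _ => hM _) univ_nonempty) univ_nonempty

lemma sum_eq_outcomeProb_add (M : 𝒳 × 𝒜 × Bool → ℝ) :
    ∑ z, M z = outcomeProb M true + outcomeProb M false := by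
  simp only [outcomeProb, Fintype.sum_prod_type, Fintype.sum_bool, sum_add_distrib]

lemma condMean_of_outcome_scaling {P Q : 𝒳 × 𝒜 × Bool → ℝ} {y : Bool} {c : ℝ} (hc : c ≠ 0)
    (hQ : ∀ x a, Q (x, a, y) = c * P (x, a, y)) (f : 𝒳 → ℝ) :
    condMean Q y f = condMean P y f := by
  simp only [condMean, outcomeProb, hQ, ← mul_sum, mul_assoc]
  exact mul_div_mul_left _ _ hc

lemma sum_eq_outcomeProb_mul_condMean_add {M : 𝒳 × 𝒜 × Bool → ℝ}
    (h₁ : outcomeProb M true ≠ 0) (h₀ : outcomeProb M false ≠ 0) (f : 𝒳 → ℝ) :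
    ∑ x, (∑ a, ∑ y, M (x, a, y)) * f x =
      outcomeProb M true * condMean M true f + outcomeProb M false * condMean M false f := by
  simp only [condMean, mul_div_cancel₀ _ h₁, mul_div_cancel₀ _ h₀, Fintype.sum_bool,
    sum_add_distrib, add_mul]

end ConditionalMean

/-- With `P` a positive probability measure on `𝒳 × {0,1} × {0,1}`, `ρ = P(Y=1)`,
and `Q` the outcome-dependent sampling distribution with outcome rate `ω ∈ (0,1)`, the geometric
aggregated odds ratio of the target population is partially identified as a function of `ρ`:
`exp(E_P[log OR_P(X)]) = exp( ρ·E_Q[logit(μ₁(X)) − logit(μ₀(X)) | Y=1]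
  + (1−ρ)·E_Q[logit(μ₁(X)) − logit(μ₀(X)) | Y=0] )`, where `μ_a(x) = Q(Y=1|X=x,A=a)`. -/
theorem geometric_odds_ratio_partial_identification
    {𝒳 : Type*} [Fintype 𝒳] [Nonempty 𝒳]
    (P Q : 𝒳 × Bool × Bool → ℝ) (ω ρ : ℝ)
    (hPsum : ∑ z : 𝒳 × Bool × Bool, P z = 1)
    (hPpos : ∀ z, 0 < P z)
    (hρ : ρ = ∑ x : 𝒳, ∑ a : Bool, P (x, a, true))
    (hω : ω ∈ Set.Ioo (0 : ℝ) 1)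
    (hQ1 : ∀ x a, Q (x, a, true) =
      ω * (P (x, a, true) / ∑ x' : 𝒳, ∑ a' : Bool, P (x', a', true)))
    (hQ0 : ∀ x a, Q (x, a, false) =
      (1 - ω) * (P (x, a, false) / ∑ x' : 𝒳, ∑ a' : Bool, P (x', a', false))) :
    Real.exp (∑ x : 𝒳, (∑ a : Bool, ∑ y : Bool, P (x, a, y)) * Real.log (condOR P x)) =
    Real.exp (
      ρ * ((∑ x : 𝒳, (∑ a : Bool, Q (x, a, true)) *
              (logit (mu Q true x) - logit (mu Q false x))) /
            (∑ x : 𝒳, ∑ a : Bool, Q (x, a, true))) +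
      (1 - ρ) * ((∑ x : 𝒳, (∑ a : Bool, Q (x, a, false)) *
              (logit (mu Q true x) - logit (mu Q false x))) /
            (∑ x : 𝒳, ∑ a : Bool, Q (x, a, false)))) := by
  obtain ⟨hω0, hω1⟩ := hω
  have hρP : outcomeProb P true = ρ := hρ.symm
  have h1ρP : outcomeProb P false = 1 - ρ := by
    rw [← hρP, ← hPsum, sum_eq_outcomeProb_add]
    ring
  let c : Bool → ℝ := fun y => (if y then ω else 1 - ω) / outcomeProb P y
  have hc : ∀ y, 0 < c y := fun y =>
    div_pos (by cases y <;> simp [hω0, hω1]) (outcomeProb_pos hPpos y)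
  have hQ : ∀ x a y, Q (x, a, y) = c y * P (x, a, y) := by
    rintro x a (_ | _)
    · rw [hQ0]; simp only [c, outcomeProb, Bool.false_eq_true, ↓reduceIte]; ring
    · rw [hQ1]; simp only [c, outcomeProb, ↓reduceIte]; ring
  have hlogOR : ∀ x, logit (mu Q true x) - logit (mu Q false x) = log (condOR P x) := fun x => by
    rw [← condOR_of_outcome_scaling hc (fun _ _ => hPpos _) (hQ x), log_condOR]
    exact fun a y => hQ x a y ▸ mul_pos (hc y) (hPpos _)
  change _ = exp (ρ * condMean Q true _ + (1 - ρ) * condMean Q false _)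
  simp only [hlogOR, condMean_of_outcome_scaling (hc true).ne' (fun x a => hQ x a true),
    condMean_of_outcome_scaling (hc false).ne' (fun x a => hQ x a false)]
  rw [← h1ρP, ← hρP, ← sum_eq_outcomeProb_mul_condMean_add (outcomeProb_pos hPpos true).ne'
    (outcomeProb_pos hPpos false).ne']
end

section
/- Let 𝒳 be a finite nonempty set, P a probability measure on 𝒳 × {0,1} × {0,1} with P(X=x, A=a, Y=y) > 0 for all x, a, y, and set ρ = P(Y=1). Let ω ∈ (0,1) and define Q by Q({(x,a,1)}) = ω · P(X=x, A=a | Y=1) and Q({(x,a,0)}) = (1−ω) · P(X=x, A=a | Y=0). Write ν_a(x) = P(Y=1 | X=x, A=a). Then the marginal odds ratio with respect to arithmetic aggregation equals an expression depending on Q only through outcome-conditional expectations and on ρ: [E_P[ν₁(X)]/E_P[1−ν₁(X)]] / [E_P[ν₀(X)]/E_P[1−ν₀(X)]] = [ (ρ·E_Q[ν₁(X)|Y=1] + (1−ρ)·E_Q[ν₁(X)|Y=0]) / (ρ·E_Q[1−ν₁(X)|Y=1] + (1−ρ)·E_Q[1−ν₁(X)|Y=0]) ] / [ (ρ·E_Q[ν₀(X)|Y=1]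 + (1−ρ)·E_Q[ν₀(X)|Y=0]) / (ρ·E_Q[1−ν₀(X)|Y=1] + (1−ρ)·E_Q[1−ν₀(X)|Y=0]) ]. -/
open Finset

/-- Expectation of `g(X)` under the marginal distribution of `X` for a data distribution `M`. -/
noncomputable def EX {𝒳 : Type*} [Fintype 𝒳] (M : 𝒳 × Bool × Bool → ℝ) (g : 𝒳 → ℝ) : ℝ :=
  ∑ x, (∑ a : Bool, ∑ y : Bool, M (x, a, y)) * g x

/-- Outcome-conditional expectation `E_M[g(X) | Y=y]` for a data distribution `M`. -/
noncomputable def EXgivenY {𝒳 : Type*} [Fintype 𝒳] (M : 𝒳 × Bool × Bool → ℝ)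
    (g : 𝒳 → ℝ) (y : Bool) : ℝ :=
  (∑ x, (∑ a : Bool, M (x, a, y)) * g x) / (∑ x, ∑ a : Bool, M (x, a, y))

section OutcomeConditional

variable {𝒳 : Type*} [Fintype 𝒳]

noncomputable def probY (M : 𝒳 × Bool × Bool → ℝ) (y : Bool) : ℝ :=
  ∑ x, ∑ a : Bool, M (x, a, y)

theorem probY_pos [Nonempty 𝒳] {M : 𝒳 × Bool × Bool → ℝ} (hM : ∀ z, 0 < M z) (y : Bool) :
    0 < probY M y :=
  sum_pos (fun _ _ => sum_pos (fun _ _ => hM _) univ_nonempty) univ_nonempty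

theorem probY_true_add_probY_false (M : 𝒳 × Bool × Bool → ℝ) :
    probY M true + probY M false = ∑ z, M z := by
  simp only [probY, ← sum_add_distrib, Fintype.sum_prod_type, Fintype.sum_bool]
  exact sum_congr rfl fun _ _ => by ring

theorem EXgivenY_eq_of_proportional {M N : 𝒳 × Bool × Bool → ℝ} {y : Bool} {c : ℝ} (hc : c ≠ 0)
    (h : ∀ x a, N (x, a, y) = c * M (x, a, y)) (g : 𝒳 → ℝ) :
    EXgivenY N g y = EXgivenY M g y := by
  simp only [EXgivenY, h, ← mul_sum, mul_assoc]
  exact mul_div_mul_left _ _ hc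

theorem probY_mul_EXgivenY_add_probY_mul_EXgivenY {M : 𝒳 × Bool × Bool → ℝ}
    (h1 : probY M true ≠ 0) (h0 : probY M false ≠ 0) (g : 𝒳 → ℝ) :
    probY M true * EXgivenY M g true + probY M false * EXgivenY M g false = EX M g := by
  rw [EXgivenY, EXgivenY, ← probY, ← probY, mul_div_cancel₀ _ h1, mul_div_cancel₀ _ h0, EX,
    ← sum_add_distrib]
  exact sum_congr rfl fun _ _ => by simp only [Fintype.sum_bool]; ring

end OutcomeConditional

/-- With `P` a positive probability measure on `𝒳 × {0,1} × {0,1}`, `ρ = P(Y=1)`,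
`Q` the outcome-dependent sampling distribution with outcome rate `ω ∈ (0,1)`, and
`ν_a(x) = P(Y=1|X=x,A=a)`, the marginal odds ratio with respect to arithmetic aggregation equals
an expression depending on `Q` only through outcome-conditional expectations and on `ρ` (the
partial identification of the population odds ratio). -/
theorem population_odds_ratio_partial_identification
    {𝒳 : Type*} [Fintype 𝒳] [Nonempty 𝒳]
    (P Q : 𝒳 × Bool × Bool → ℝ) (ω ρ : ℝ)
    (hPsum : ∑ z : 𝒳 × Bool × Bool, P z = 1)
    (hPpos : ∀ z, 0 < P z)
    (hρ : ρ = ∑ x : 𝒳, ∑ a : Bool, P (x, a, true))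
    (hω : ω ∈ Set.Ioo (0 : ℝ) 1)
    (hQ1 : ∀ x a, Q (x, a, true) =
      ω * (P (x, a, true) / ∑ x' : 𝒳, ∑ a' : Bool, P (x', a', true)))
    (hQ0 : ∀ x a, Q (x, a, false) =
      (1 - ω) * (P (x, a, false) / ∑ x' : 𝒳, ∑ a' : Bool, P (x', a', false))) :
    (EX P (fun x => mu P true x) / EX P (fun x => 1 - mu P true x)) /
      (EX P (fun x => mu P false x) / EX P (fun x => 1 - mu P false x)) =
    ((ρ * EXgivenY Q (fun x => mu P true x) true +
        (1 - ρ) * EXgivenY Q (fun x => mu P true x) false) /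
      (ρ * EXgivenY Q (fun x => 1 - mu P true x) true +
        (1 - ρ) * EXgivenY Q (fun x => 1 - mu P true x) false)) /
    ((ρ * EXgivenY Q (fun x => mu P false x) true +
        (1 - ρ) * EXgivenY Q (fun x => mu P false x) false) /
      (ρ * EXgivenY Q (fun x => 1 - mu P false x) true +
        (1 - ρ) * EXgivenY Q (fun x => 1 - mu P false x) false)) := by
  obtain ⟨hω0, hω1⟩ := hω
  have hP (y : Bool) : probY P y ≠ 0 := (probY_pos hPpos y).ne'
  have hρ1 : ρ = probY P true := hρ
  have hρ0 : 1 - ρ = probY P false := by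
    rw [hρ1, ← hPsum, ← probY_true_add_probY_false]; ring
  have hQP1 := EXgivenY_eq_of_proportional (N := Q) (M := P)
    (div_ne_zero hω0.ne' (hP true)) fun x a => by rw [hQ1, probY]; ring
  have hQP0 := EXgivenY_eq_of_proportional (N := Q) (M := P)
    (div_ne_zero (sub_ne_zero.2 hω1.ne') (hP false)) fun x a => by rw [hQ0, probY]; ring
  have hmix (g : 𝒳 → ℝ) :
      ρ * EXgivenY Q g true + (1 - ρ) * EXgivenY Q g false = EX P g := by
    rw [hQP1, hQP0, hρ0, hρ1, probY_mul_EXgivenY_add_probY_mul_EXgivenY (hP true) (hP false)]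
  rw [hmix, hmix, hmix, hmix]
end

section
/- Let 𝒳 be a finite nonempty set, p : 𝒳 → [0,1] a probability mass function (∑_x p(x) = 1), and μ₁, μ₀ : 𝒳 → (0,1). Define the conditional odds ratio OR(x) = [μ₁(x)/(1−μ₁(x))] / [μ₀(x)/(1−μ₀(x))] and, for a ∈ {0,1}, the marginal odds with respect to geometric aggregation ∏_x μ_a(x)^{p(x)} / ∏_x (1−μ_a(x))^{p(x)}. Then the odds ratio is collapsible with respect to the geometric mean with weights p(x): [∏_x μ₁(x)^{p(x)} / ∏_x (1−μ₁(x))^{p(x)}] / [∏_x μ₀(x)^{p(x)} / ∏_x (1−μ₀(x))^{p(x)}] = ∏_x OR(x)^{p(x)}. In particular, if OR(x) = c for all x with p(x) > 0, then the marginal odds ratio with respect to geometric aggregation equals c. -/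
/-!
Raising nonnegative reals to a fixed real power is multiplicative, so a weighted geometric mean
commutes with quotients: aggregating the four risk functions separately and then forming the odds
ratio gives the same as aggregating the conditional odds ratios. A weighted geometric mean of a
function that is constant on the support of the weights is that constant, which gives the
second claim.
-/

open Finset

namespace Real

variable {ι : Type*} {s : Finset ι} {w : ι → ℝ}

theorem prod_rpow_div_prod_rpow {f g : ι → ℝ} (hf : ∀ i ∈ s, 0 ≤ f i) (hg : ∀ i ∈ s, 0 ≤ g i) :
    (∏ i ∈ s, f i ^ w i) / ∏ i ∈ s, g i ^ w i = ∏ i ∈ s, (f i / g i) ^ w i := by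
  rw [← prod_div_distrib]
  exact prod_congr rfl fun i hi => (div_rpow (hf i hi) (hg i hi) (w i)).symm

theorem prod_rpow_eq_of_eq_on_pos_weights {f : ι → ℝ} {c : ℝ} (hf : ∀ i ∈ s, 0 ≤ f i)
    (hw : ∀ i ∈ s, 0 ≤ w i) (hw_sum : ∑ i ∈ s, w i = 1) (hfc : ∀ i ∈ s, 0 < w i → f i = c) :
    ∏ i ∈ s, f i ^ w i = c := by
  obtain ⟨i₀, hi₀, hw₀⟩ := exists_ne_zero_of_sum_ne_zero (hw_sum ▸ one_ne_zero)
  have hc : 0 ≤ c := hfc i₀ hi₀ ((hw i₀ hi₀).lt_of_ne' hw₀) ▸ hf i₀ hi₀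
  have hfc_pow : ∀ i ∈ s, f i ^ w i = c ^ w i := fun i hi => by
    rcases (hw i hi).eq_or_lt with hzero | hpos
    · rw [← hzero, rpow_zero, rpow_zero]
    · rw [hfc i hi hpos]
  rw [prod_congr rfl hfc_pow, ← rpow_sum_of_nonneg hc hw, hw_sum, rpow_one]

end Real

theorem odds_ratio_collapsible_geometric_general
    {𝒳 : Type*} [Fintype 𝒳]
    (p μ₁ μ₀ : 𝒳 → ℝ)
    (hp : ∀ x, 0 ≤ p x) (hpsum : ∑ x, p x = 1)
    (hμ₁ : ∀ x, μ₁ x ∈ Set.Ioo (0 : ℝ) 1)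
    (hμ₀ : ∀ x, μ₀ x ∈ Set.Ioo (0 : ℝ) 1) :
    ((∏ x, μ₁ x ^ p x) / ∏ x, (1 - μ₁ x) ^ p x) /
        ((∏ x, μ₀ x ^ p x) / ∏ x, (1 - μ₀ x) ^ p x) =
      (∏ x, ((μ₁ x / (1 - μ₁ x)) / (μ₀ x / (1 - μ₀ x))) ^ p x) ∧
    ∀ c : ℝ, (∀ x, 0 < p x → (μ₁ x / (1 - μ₁ x)) / (μ₀ x / (1 - μ₀ x)) = c) →
      ((∏ x, μ₁ x ^ p x) / ∏ x, (1 - μ₁ x) ^ p x) /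
          ((∏ x, μ₀ x ^ p x) / ∏ x, (1 - μ₀ x) ^ p x) = c := by
  have hμ₁_nonneg (x : 𝒳) : 0 ≤ μ₁ x := (hμ₁ x).1.le
  have hμ₀_nonneg (x : 𝒳) : 0 ≤ μ₀ x := (hμ₀ x).1.le
  have hμ₁_compl (x : 𝒳) : 0 ≤ 1 - μ₁ x := sub_nonneg.2 (hμ₁ x).2.le
  have hμ₀_compl (x : 𝒳) : 0 ≤ 1 - μ₀ x := sub_nonneg.2 (hμ₀ x).2.le
  have hodds₁ (x : 𝒳) : 0 ≤ μ₁ x / (1 - μ₁ x) := div_nonneg (hμ₁_nonneg x) (hμ₁_compl x)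
  have hodds₀ (x : 𝒳) : 0 ≤ μ₀ x / (1 - μ₀ x) := div_nonneg (hμ₀_nonneg x) (hμ₀_compl x)
  have collapse : ((∏ x, μ₁ x ^ p x) / ∏ x, (1 - μ₁ x) ^ p x) /
        ((∏ x, μ₀ x ^ p x) / ∏ x, (1 - μ₀ x) ^ p x) =
      ∏ x, ((μ₁ x / (1 - μ₁ x)) / (μ₀ x / (1 - μ₀ x))) ^ p x := by
    rw [Real.prod_rpow_div_prod_rpow (fun x _ => hμ₁_nonneg x) (fun x _ => hμ₁_compl x),
      Real.prod_rpow_div_prod_rpow (fun x _ => hμ₀_nonneg x) (fun x _ => hμ₀_compl x),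
      Real.prod_rpow_div_prod_rpow (fun x _ => hodds₁ x) (fun x _ => hodds₀ x)]
  refine ⟨collapse, fun c hc => collapse ▸ ?_⟩
  exact Real.prod_rpow_eq_of_eq_on_pos_weights (fun x _ => div_nonneg (hodds₁ x) (hodds₀ x))
    (fun x _ => hp x) hpsum (fun x _ => hc x)

/-- Let `p : 𝒳 → [0,1]` be a probability mass function on a finite nonempty set and
let `μ₁, μ₀ : 𝒳 → (0,1)` be risk functions.  With the conditional odds ratio
`OR(x) = [μ₁(x)/(1−μ₁(x))] / [μ₀(x)/(1−μ₀(x))]`, the odds ratio is collapsible with respect to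
the geometric mean with weights `p(x)`: the marginal odds ratio under geometric aggregation
equals `∏ x, OR(x)^{p(x)}`.  In particular, if `OR(x) = c` for all `x` with `p(x) > 0`, then the
marginal odds ratio with respect to geometric aggregation equals `c`.  (Powers are real powers,
`Real.rpow`.) -/
theorem odds_ratio_collapsible_geometric
    {𝒳 : Type*} [Fintype 𝒳] [Nonempty 𝒳]
    (p μ₁ μ₀ : 𝒳 → ℝ)
    (hp : ∀ x, 0 ≤ p x) (hpsum : ∑ x, p x = 1)
    (hμ₁ : ∀ x, μ₁ x ∈ Set.Ioo (0 : ℝ) 1)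
    (hμ₀ : ∀ x, μ₀ x ∈ Set.Ioo (0 : ℝ) 1) :
    ((∏ x, μ₁ x ^ p x) / ∏ x, (1 - μ₁ x) ^ p x) /
        ((∏ x, μ₀ x ^ p x) / ∏ x, (1 - μ₀ x) ^ p x) =
      (∏ x, ((μ₁ x / (1 - μ₁ x)) / (μ₀ x / (1 - μ₀ x))) ^ p x) ∧
    ∀ c : ℝ, (∀ x, 0 < p x → (μ₁ x / (1 - μ₁ x)) / (μ₀ x / (1 - μ₀ x)) = c) →
      ((∏ x, μ₁ x ^ p x) / ∏ x, (1 - μ₁ x) ^ p x) /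
          ((∏ x, μ₀ x ^ p x) / ∏ x, (1 - μ₀ x) ^ p x) = c :=
  odds_ratio_collapsible_geometric_general p μ₁ μ₀ hp hpsum hμ₁ hμ₀
end

section
/- Let 𝒳 be a finite nonempty set, p : 𝒳 → [0,1] a probability mass function, μ₁ : 𝒳 → [0,∞), and μ₀ : 𝒳 → (0,∞) with ∑_x p(x)μ₀(x) > 0. Define weights w(x) = p(x)·μ₀(x) / ∑_{x'} p(x')μ₀(x'). Then w(x) ≥ 0 for all x, ∑_x w(x) = 1, and the risk ratio is collapsible with respect to the arithmetic mean with weights w: ∑_x w(x) · (μ₁(x)/μ₀(x)) = (∑_x p(x)μ₁(x)) / (∑_x p(x)μ₀(x)). -/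
open Finset

namespace Finset

variable {ι K : Type*} [Field K] {s : Finset ι}

theorem sum_div_sum_eq_one {f : ι → K} (hf : ∑ i ∈ s, f i ≠ 0) :
    ∑ i ∈ s, f i / ∑ j ∈ s, f j = 1 := by
  rw [← sum_div, div_self hf]

theorem sum_mul_div_sum_mul_mul_div {a b c : ι → K} (hb : ∀ i ∈ s, b i ≠ 0) :
    ∑ i ∈ s, a i * b i / (∑ j ∈ s, a j * b j) * (c i / b i) =
      (∑ i ∈ s, a i * c i) / ∑ i ∈ s, a i * b i := by
  rw [sum_div]
  refine sum_congr rfl fun i hi => ?_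
  have := hb i hi
  field_simp

end Finset

theorem risk_ratio_collapsible_arithmetic_general
    {𝒳 : Type*} [Fintype 𝒳]
    (p μ₁ μ₀ : 𝒳 → ℝ)
    (hp0 : ∀ x, 0 ≤ p x)
    (hμ₀ : ∀ x, 0 < μ₀ x)
    (hden : 0 < ∑ x, p x * μ₀ x) :
    let w : 𝒳 → ℝ := fun x => p x * μ₀ x / ∑ x', p x' * μ₀ x'
    (∀ x, 0 ≤ w x) ∧ (∑ x, w x) = 1 ∧
      (∑ x, w x * (μ₁ x / μ₀ x)) = (∑ x, p x * μ₁ x) / (∑ x, p x * μ₀ x) :=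
  ⟨fun x => div_nonneg (mul_nonneg (hp0 x) (hμ₀ x).le) hden.le,
    sum_div_sum_eq_one hden.ne',
    sum_mul_div_sum_mul_mul_div fun x _ => (hμ₀ x).ne'⟩

/-- The risk ratio is collapsible with respect to the arithmetic mean.  With
`p : 𝒳 → [0,1]` a pmf, `μ₁ : 𝒳 → [0,∞)`, `μ₀ : 𝒳 → (0,∞)`, `∑ x, p(x)μ₀(x) > 0`, and weights
`w(x) = p(x)·μ₀(x) / ∑ x', p(x')μ₀(x')`, the weights are nonnegative, sum to one, and the
weighted average of the conditional risk ratios equals the marginal risk ratio: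
`∑ x, w(x)·(μ₁(x)/μ₀(x)) = (∑ x, p(x)μ₁(x)) / (∑ x, p(x)μ₀(x))`. -/
theorem risk_ratio_collapsible_arithmetic
    {𝒳 : Type*} [Fintype 𝒳] [Nonempty 𝒳]
    (p μ₁ μ₀ : 𝒳 → ℝ)
    (hp0 : ∀ x, 0 ≤ p x) (hp1 : ∀ x, p x ≤ 1) (hpsum : ∑ x, p x = 1)
    (hμ₁ : ∀ x, 0 ≤ μ₁ x)
    (hμ₀ : ∀ x, 0 < μ₀ x)
    (hden : 0 < ∑ x, p x * μ₀ x) :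
    let w : 𝒳 → ℝ := fun x => p x * μ₀ x / ∑ x', p x' * μ₀ x'
    (∀ x, 0 ≤ w x) ∧ (∑ x, w x) = 1 ∧
      (∑ x, w x * (μ₁ x / μ₀ x)) = (∑ x, p x * μ₁ x) / (∑ x, p x * μ₀ x) :=
  risk_ratio_collapsible_arithmetic_general p μ₁ μ₀ hp0 hμ₀ hden
end

section
/- Let 𝒳 be a finite nonempty set and let Q and Q̄ be probability measures on 𝒳 × {0,1} × {0,1} with coordinates (X, A, Y), each assigning positive probability to every point (x,a,y). For each measure define μ₀(x) = Q(Y=1|X=x,A=0), π₀(x) = Q(A=0|X=x), η(x) = Q(Y=1|X=x), ω = Q(Y=1), and the barred analogues μ̄₀, π̄₀, η̄, ω̄ from Q̄; let logit(t) = log(t/(1−t)), ψ₀₁(Q) = E_Q[logit(μ₀(X)) | Y=1], ψ₀₁(Q̄) = E_{Q̄}[logit(μ̄₀(X)) | Y=1], and define the influence function φ₀₁(x,a,y; Q̄) = logit(μ̄₀(x))·1{y=1}/ω̄ + (η̄(x)/ω̄)·1{a=0}·(y − μ̄₀(x))/(π̄₀(x)·μ̄₀(x)·(1−μ̄₀(x)))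 − ψ₀₁(Q̄)·1{y=1}/ω̄. Then there exists a function μ₀* : 𝒳 → (0,1) with μ₀*(x) in the closed interval with endpoints μ̄₀(x) and μ₀(x) for every x, such that the von Mises expansion holds: ψ₀₁(Q) = ψ₀₁(Q̄) + ∑_{(x,a,y)} φ₀₁(x,a,y; Q̄) · (Q({(x,a,y)}) − Q̄({(x,a,y)})) + R₂(Q̄, Q), where R₂(Q̄, Q) = ((ω̄ − ω)/ω̄)·(ψ₀₁(Q) − ψ₀₁(Q̄)) + (1/ω̄) · E_{X∼Q}[ ((μ₀(X) − μ̄₀(X))/(μ̄₀(X)(1−μ̄₀(X))))·(η(X) − η̄(X)) + η̄(X)·((μ₀(X) − μ̄₀(X))/(μ̄₀(X)(1−μ̄₀(X))))·((π̄₀(X) − π₀(X))/π̄₀(X)) + η(X)·((μ₀*(X) − 1/2)/(μ₀*(X)²(1−μ₀*(X))²))·(μ₀(X) − μ̄₀(X))² ]. -/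
/-
Taylor-expanding `logit` to second order at `μ̄₀(x)`, with Lagrange remainder, produces the
intermediate point `μ₀*(x)`. Everything else is a finite algebraic identity: in the influence
function, `(1 - μ̄₀(x)) Q(x,0,1) - μ̄₀(x) Q(x,0,0) = π₀(x) Q(X = x) (μ₀(x) - μ̄₀(x))` while the same
expression vanishes for `Q̄`, and the centred term `logit(μ̄₀(X)) - ψ₀₁(Q̄)` has mean zero under
`Q̄(· | Y = 1)`. Collecting terms, the first-order parts cancel and the remainder `R₂(Q̄, Q)` is
what is left, the factor `(ω̄ - ω)/ω̄` accounting for the change of the normalising constant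
`ω = Q(Y = 1)`.
-/

open Finset

/-- Numeric value of a binary variable: `true ↦ 1`, `false ↦ 0`. -/
noncomputable def b2r (b : Bool) : ℝ := if b then 1 else 0

/-- `π_a(x) = M(A=a | X=x)`. -/
noncomputable def piA {𝒳 : Type*} (M : 𝒳 × Bool × Bool → ℝ) (a : Bool) (x : 𝒳) : ℝ :=
  (M (x, a, true) + M (x, a, false)) / ∑ a' : Bool, ∑ y' : Bool, M (x, a', y')

/-- `η_y(x) = M(Y=y | X=x)`. -/
noncomputable def etaY {𝒳 : Type*} (M : 𝒳 × Bool × Bool → ℝ) (y : Bool) (x : 𝒳) : ℝ :=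
  (∑ a' : Bool, M (x, a', y)) / ∑ a' : Bool, ∑ y' : Bool, M (x, a', y')

/-- `ω_y = M(Y=y)`. -/
noncomputable def omegaY {𝒳 : Type*} [Fintype 𝒳] (M : 𝒳 × Bool × Bool → ℝ) (y : Bool) : ℝ :=
  ∑ x, ∑ a' : Bool, M (x, a', y)

/-- `ψ_{a,y}(M) = E_M[logit(μ_a(X)) | Y=y]`. -/
noncomputable def psi {𝒳 : Type*} [Fintype 𝒳] (M : 𝒳 × Bool × Bool → ℝ) (a y : Bool) : ℝ :=
  (∑ x, (∑ a' : Bool, M (x, a', y)) * logit (mu M a x)) / omegaY M y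

/-- The (efficient) influence function `φ₀₁(x,a,y; M)` of `ψ₀₁(M) = E_M[logit(μ₀(X)) | Y=1]`:
`φ₀₁(x,a,y) = logit(μ₀(x))·1{y=1}/ω + (η(x)/ω)·1{a=0}·(y − μ₀(x))/(π₀(x)·μ₀(x)·(1−μ₀(x)))
  − ψ₀₁·1{y=1}/ω`, where `ω = M(Y=1)` and `η(x) = M(Y=1|X=x)`. -/
noncomputable def phi01 {𝒳 : Type*} [Fintype 𝒳] (M : 𝒳 × Bool × Bool → ℝ)
    (z : 𝒳 × Bool × Bool) : ℝ :=
  logit (mu M false z.1) * (if z.2.2 = true then (1 : ℝ) else 0) / omegaY M true +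
    etaY M true z.1 / omegaY M true *
      ((if z.2.1 = false then (1 : ℝ) else 0) * (b2r z.2.2 - mu M false z.1) /
        (piA M false z.1 * mu M false z.1 * (1 - mu M false z.1))) -
    psi M false true * (if z.2.2 = true then (1 : ℝ) else 0) / omegaY M true

theorem hasDerivAt_logit {t : ℝ} (h0 : t ≠ 0) (h1 : 1 - t ≠ 0) :
    HasDerivAt logit (1 / (t * (1 - t))) t :=
  (((hasDerivAt_id' t).fun_div ((hasDerivAt_id' t).const_sub 1) h1).log
    (div_ne_zero h0 h1)).congr_deriv (by field_simp; ring)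

theorem hasDerivAt_one_div_mul_one_sub {t : ℝ} (h0 : t ≠ 0) (h1 : 1 - t ≠ 0) :
    HasDerivAt (fun s => 1 / (s * (1 - s))) ((2 * t - 1) / (t ^ 2 * (1 - t) ^ 2)) t :=
  ((hasDerivAt_const t (1 : ℝ)).fun_div
    ((hasDerivAt_id' t).fun_mul ((hasDerivAt_id' t).const_sub 1)) (mul_ne_zero h0 h1)).congr_deriv
    (by field_simp; ring)

theorem contDiffOn_logit : ContDiffOn ℝ 2 logit (Set.Ioo 0 1) := by
  intro t ht
  have h0 : t ≠ 0 := ht.1.ne'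
  have h1 : 1 - t ≠ 0 := by linarith [ht.2]
  have h2 : t / (1 - t) ≠ 0 := div_ne_zero h0 h1
  apply ContDiffAt.contDiffWithinAt
  unfold logit
  fun_prop (disch := assumption)

theorem exists_logit_taylor {a b : ℝ} (ha : a ∈ Set.Ioo (0 : ℝ) 1)
    (hb : b ∈ Set.Ioo (0 : ℝ) 1) :
    ∃ c ∈ Set.uIcc a b, logit b = logit a + (b - a) / (a * (1 - a)) +
      (c - 1 / 2) / (c ^ 2 * (1 - c) ^ 2) * (b - a) ^ 2 := by
  rcases eq_or_ne a b with rfl | hab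
  · exact ⟨a, Set.left_mem_uIcc, by simp⟩
  have hsub : Set.uIcc a b ⊆ Set.Ioo 0 1 := Set.ordConnected_Ioo.uIcc_subset ha hb
  obtain ⟨c, hc, h⟩ := taylor_mean_remainder_lagrange_iteratedDeriv hab (contDiffOn_logit.mono hsub)
  refine ⟨c, Set.uIoo_subset_uIcc_self hc, ?_⟩
  have hc01 : c ∈ Set.Ioo (0 : ℝ) 1 := hsub (Set.uIoo_subset_uIcc_self hc)
  have hderiv : derivWithin logit (Set.uIcc a b) a = 1 / (a * (1 - a)) :=
    (hasDerivAt_logit ha.1.ne' (by linarith [ha.2])).hasDerivWithinAt.derivWithin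
      (uniqueDiffOn_uIcc hab a Set.left_mem_uIcc)
  have hderiv2 : iteratedDeriv 2 logit c = (2 * c - 1) / (c ^ 2 * (1 - c) ^ 2) := by
    have hev : deriv logit =ᶠ[nhds c] fun s => 1 / (s * (1 - s)) := by
      filter_upwards [isOpen_Ioo.mem_nhds hc01] with s hs
      exact (hasDerivAt_logit hs.1.ne' (by linarith [hs.2])).deriv
    rw [iteratedDeriv_succ, iteratedDeriv_one, hev.deriv_eq]
    exact (hasDerivAt_one_div_mul_one_sub hc01.1.ne' (by linarith [hc01.2])).deriv
  simp only [taylorWithinEval_succ, taylor_within_zero_eval, zero_add, iteratedDerivWithin_one,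
    hderiv, hderiv2, Nat.cast_zero, Nat.factorial_zero, Nat.cast_one, mul_one, inv_one, one_mul,
    pow_one, smul_eq_mul, Nat.reduceAdd, Nat.factorial_two, Nat.cast_ofNat, one_div] at h
  linear_combination h

section Nuisance

variable {𝒳 : Type*} (M : 𝒳 × Bool × Bool → ℝ)

theorem mu_mem_Ioo (hM : ∀ z, 0 < M z) (a : Bool) (x : 𝒳) : mu M a x ∈ Set.Ioo 0 1 :=
  ⟨div_pos (hM _) (add_pos (hM _) (hM _)),
    (div_lt_one (add_pos (hM _) (hM _))).2 (lt_add_of_pos_right _ (hM _))⟩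

theorem sum_sum_pos (hM : ∀ z, 0 < M z) (x : 𝒳) : 0 < ∑ a, ∑ y, M (x, a, y) :=
  sum_pos (fun _ _ => sum_pos (fun _ _ => hM _) univ_nonempty) univ_nonempty

theorem piA_pos (hM : ∀ z, 0 < M z) (a : Bool) (x : 𝒳) : 0 < piA M a x :=
  div_pos (add_pos (hM _) (hM _)) (sum_sum_pos M hM x)

theorem omegaY_pos [Fintype 𝒳] [Nonempty 𝒳] (hM : ∀ z, 0 < M z) (y : Bool) :
    0 < omegaY M y :=
  sum_pos (fun _ _ => sum_pos (fun _ _ => hM _) univ_nonempty) univ_nonempty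

theorem sum_eq_etaY_mul {x : 𝒳} (hx : ∑ a, ∑ y, M (x, a, y) ≠ 0) (y : Bool) :
    ∑ a, M (x, a, y) = etaY M y x * ∑ a, ∑ y, M (x, a, y) :=
  (div_mul_cancel₀ _ hx).symm

theorem add_eq_piA_mul {x : 𝒳} (hx : ∑ a, ∑ y, M (x, a, y) ≠ 0) (a : Bool) :
    M (x, a, true) + M (x, a, false) = piA M a x * ∑ a, ∑ y, M (x, a, y) :=
  (div_mul_cancel₀ _ hx).symm

theorem one_sub_mul_sub_mul_eq {x : 𝒳} {a : Bool} (hxa : M (x, a, true) + M (x, a, false) ≠ 0)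
    (t : ℝ) :
    (1 - t) * M (x, a, true) - t * M (x, a, false) =
      (M (x, a, true) + M (x, a, false)) * (mu M a x - t) := by
  unfold mu
  field_simp
  ring

theorem omegaY_mul_psi_sub [Fintype 𝒳] {y : Bool} (hy : omegaY M y ≠ 0) (a : Bool) (c : ℝ) :
    omegaY M y * (psi M a y - c) = ∑ x, (∑ a', M (x, a', y)) * (logit (mu M a x) - c) := by
  simp only [psi, mul_sub, mul_div_cancel₀ _ hy, sum_sub_distrib, ← sum_mul]
  rfl

theorem omegaY_mul_sum_phi01_mul [Fintype 𝒳] (hω : omegaY M true ≠ 0)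
    (P : 𝒳 × Bool × Bool → ℝ) :
    omegaY M true * ∑ z, phi01 M z * P z =
      ∑ x, ((∑ a, P (x, a, true)) * (logit (mu M false x) - psi M false true) +
        etaY M true x * ((1 - mu M false x) * P (x, false, true) -
            mu M false x * P (x, false, false)) /
          (piA M false x * mu M false x * (1 - mu M false x))) := by
  simp only [mul_sum, Fintype.sum_prod_type, Fintype.sum_bool]
  refine sum_congr rfl fun x _ => ?_
  simp only [phi01, b2r, ↓reduceIte, Bool.false_eq_true, Bool.true_eq_false]
  field_simp
  ring

end Nuisance

section Remainder

variable {𝒳 : Type*} (Q Qb : 𝒳 × Bool × Bool → ℝ)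

/-- The integrand of `E_{X∼Q}[…]` in `R₂(Q̄, Q)`, with `c` in place of `μ₀*(X)`. -/
noncomputable def remainderIntegrand (c : ℝ) (x : 𝒳) : ℝ :=
  (mu Q false x - mu Qb false x) / (mu Qb false x * (1 - mu Qb false x)) *
      (etaY Q true x - etaY Qb true x) +
    etaY Qb true x * ((mu Q false x - mu Qb false x) / (mu Qb false x * (1 - mu Qb false x))) *
      ((piA Qb false x - piA Q false x) / piA Qb false x) +
    etaY Q true x * ((c - 1 / 2) / (c ^ 2 * (1 - c) ^ 2)) * (mu Q false x - mu Qb false x) ^ 2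

theorem sum_mul_logit_mu_sub_logit_mu (hQ : ∀ z, 0 < Q z) (hQb : ∀ z, 0 < Qb z) (x : 𝒳) {c : ℝ}
    (hc : logit (mu Q false x) = logit (mu Qb false x) +
      (mu Q false x - mu Qb false x) / (mu Qb false x * (1 - mu Qb false x)) +
      (c - 1 / 2) / (c ^ 2 * (1 - c) ^ 2) * (mu Q false x - mu Qb false x) ^ 2) :
    (∑ a, Q (x, a, true)) * (logit (mu Q false x) - logit (mu Qb false x)) =
      etaY Qb true x * ((1 - mu Qb false x) * (Q (x, false, true) - Qb (x, false, true)) -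
          mu Qb false x * (Q (x, false, false) - Qb (x, false, false))) /
        (piA Qb false x * mu Qb false x * (1 - mu Qb false x)) +
      (∑ a, ∑ y, Q (x, a, y)) * remainderIntegrand Q Qb c x := by
  have hq := (sum_sum_pos Q hQ x).ne'
  have hQ0 : (1 - mu Qb false x) * Q (x, false, true) - mu Qb false x * Q (x, false, false) =
      piA Q false x * (∑ a, ∑ y, Q (x, a, y)) * (mu Q false x - mu Qb false x) := by
    rw [one_sub_mul_sub_mul_eq Q (add_pos (hQ _) (hQ _)).ne', add_eq_piA_mul Q hq]
  have hQb0 : (1 - mu Qb false x) * Qb (x, false, true) - mu Qb false x * Qb (x, false, false) =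
      0 := by
    rw [one_sub_mul_sub_mul_eq Qb (add_pos (hQb _) (hQb _)).ne', sub_self, mul_zero]
  have hmb := mu_mem_Ioo Qb hQb false x
  have hmb0 : mu Qb false x ≠ 0 := hmb.1.ne'
  have hmb1 : 1 - mu Qb false x ≠ 0 := by linarith [hmb.2]
  have hpb := (piA_pos Qb hQb false x).ne'
  have hsplit : (1 - mu Qb false x) * (Q (x, false, true) - Qb (x, false, true)) -
      mu Qb false x * (Q (x, false, false) - Qb (x, false, false)) =
      ((1 - mu Qb false x) * Q (x, false, true) - mu Qb false x * Q (x, false, false)) -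
        ((1 - mu Qb false x) * Qb (x, false, true) - mu Qb false x * Qb (x, false, false)) := by
    ring
  rw [hc, sum_eq_etaY_mul Q hq, hsplit, hQ0, hQb0, sub_zero]
  unfold remainderIntegrand
  field_simp
  ring

end Remainder

theorem eq_add_add_of_mul_sub_eq {ω ωb ψ ψb S T : ℝ} (hωb : ωb ≠ 0)
    (h : ω * (ψ - ψb) = ωb * S + T) :
    ψ = ψb + S + ((ωb - ω) / ωb * (ψ - ψb) + 1 / ωb * T) := by
  field_simp
  linear_combination h

theorem von_mises_expansion_psi01_general
    {𝒳 : Type*} [Fintype 𝒳] [Nonempty 𝒳]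
    (Q Qb : 𝒳 × Bool × Bool → ℝ)
    (hQpos : ∀ z, 0 < Q z)
    (hQbpos : ∀ z, 0 < Qb z) :
    ∃ μstar : 𝒳 → ℝ,
      (∀ x, μstar x ∈ Set.Ioo (0 : ℝ) 1 ∧
        μstar x ∈ Set.uIcc (mu Qb false x) (mu Q false x)) ∧
      psi Q false true = psi Qb false true +
        (∑ z : 𝒳 × Bool × Bool, phi01 Qb z * (Q z - Qb z)) +
        ((omegaY Qb true - omegaY Q true) / omegaY Qb true *
            (psi Q false true - psi Qb false true) +
          1 / omegaY Qb true *
            ∑ x, (∑ a : Bool, ∑ y : Bool, Q (x, a, y)) *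
              ((mu Q false x - mu Qb false x) /
                    (mu Qb false x * (1 - mu Qb false x)) *
                  (etaY Q true x - etaY Qb true x) +
                etaY Qb true x *
                  ((mu Q false x - mu Qb false x) /
                    (mu Qb false x * (1 - mu Qb false x))) *
                  ((piA Qb false x - piA Q false x) / piA Qb false x) +
                etaY Q true x *
                  ((μstar x - 1 / 2) / (μstar x ^ 2 * (1 - μstar x) ^ 2)) *
                  (mu Q false x - mu Qb false x) ^ 2)) := by
  have hmu := mu_mem_Ioo Q hQpos false
  have hmub := mu_mem_Ioo Qb hQbpos false
  choose μstar hμstar hlogit using fun x => exists_logit_taylor (hmub x) (hmu x)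
  refine ⟨μstar, fun x =>
    ⟨Set.ordConnected_Ioo.uIcc_subset (hmub x) (hmu x) (hμstar x), hμstar x⟩, ?_⟩
  have hω := (omegaY_pos Q hQpos true).ne'
  have hωb := (omegaY_pos Qb hQbpos true).ne'
  refine eq_add_add_of_mul_sub_eq hωb ?_
  -- `ω̄ (ψ̄ - ψ̄) = 0` is subtracted to centre the `Q̄`-part of the influence function.
  calc omegaY Q true * (psi Q false true - psi Qb false true)
        = omegaY Q true * (psi Q false true - psi Qb false true) -
            omegaY Qb true * (psi Qb false true - psi Qb false true) := by
          rw [sub_self, mul_zero, sub_zero]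
    _ = ∑ x, ((∑ a, Q (x, a, true)) * (logit (mu Q false x) - psi Qb false true) -
          (∑ a, Qb (x, a, true)) * (logit (mu Qb false x) - psi Qb false true)) := by
          rw [omegaY_mul_psi_sub Q hω, omegaY_mul_psi_sub Qb hωb, sum_sub_distrib]
    _ = omegaY Qb true * ∑ z, phi01 Qb z * (Q z - Qb z) +
          ∑ x, (∑ a, ∑ y, Q (x, a, y)) * remainderIntegrand Q Qb (μstar x) x := by
          rw [omegaY_mul_sum_phi01_mul Qb hωb, ← sum_add_distrib]
          refine sum_congr rfl fun x _ => ?_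
          simp only [sum_sub_distrib]
          linear_combination sum_mul_logit_mu_sub_logit_mu Q Qb hQpos hQbpos x (hlogit x)

/-- von Mises expansion of `ψ₀₁` between two positive probability measures `Q`
(truth) and `Qb` (= `Q̄`): there is an intermediate function `μ₀* : 𝒳 → (0,1)`, with `μ₀*(x)`
in the closed interval with endpoints `μ̄₀(x)` and `μ₀(x)`, such that
`ψ₀₁(Q) = ψ₀₁(Q̄) + ∑_z φ₀₁(z; Q̄)·(Q(z) − Q̄(z)) + R₂(Q̄, Q)` with the second-order remainder
`R₂(Q̄, Q) = ((ω̄ − ω)/ω̄)·(ψ₀₁(Q) − ψ₀₁(Q̄)) + (1/ω̄)·E_{X∼Q}[ ... ]` as in the paper. -/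
theorem von_mises_expansion_psi01
    {𝒳 : Type*} [Fintype 𝒳] [Nonempty 𝒳]
    (Q Qb : 𝒳 × Bool × Bool → ℝ)
    (hQsum : ∑ z : 𝒳 × Bool × Bool, Q z = 1) (hQpos : ∀ z, 0 < Q z)
    (hQbsum : ∑ z : 𝒳 × Bool × Bool, Qb z = 1) (hQbpos : ∀ z, 0 < Qb z) :
    ∃ μstar : 𝒳 → ℝ,
      (∀ x, μstar x ∈ Set.Ioo (0 : ℝ) 1 ∧
        μstar x ∈ Set.uIcc (mu Qb false x) (mu Q false x)) ∧
      psi Q false true = psi Qb false true +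
        (∑ z : 𝒳 × Bool × Bool, phi01 Qb z * (Q z - Qb z)) +
        ((omegaY Qb true - omegaY Q true) / omegaY Qb true *
            (psi Q false true - psi Qb false true) +
          1 / omegaY Qb true *
            ∑ x, (∑ a : Bool, ∑ y : Bool, Q (x, a, y)) *
              ((mu Q false x - mu Qb false x) /
                    (mu Qb false x * (1 - mu Qb false x)) *
                  (etaY Q true x - etaY Qb true x) +
                etaY Qb true x *
                  ((mu Q false x - mu Qb false x) /
                    (mu Qb false x * (1 - mu Qb false x))) *
                  ((piA Qb false x - piA Q false x) / piA Qb false x) +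
                etaY Q true x *
                  ((μstar x - 1 / 2) / (μstar x ^ 2 * (1 - μstar x) ^ 2)) *
                  (mu Q false x - mu Qb false x) ^ 2)) :=
  von_mises_expansion_psi01_general Q Qb hQpos hQbpos
end

section
/- Let (Ω, P) be a probability space carrying random elements X with values in a finite set 𝒳, A ∈ {0,1}, and potential outcomes Y⁰, Y¹ ∈ {0,1}, with observed outcome Y = A·Y¹ + (1−A)·Y⁰ (consistency). Assume for every x with P(X=x) > 0: (ignorability) P(Y¹=y₁, Y⁰=y₀, A=a | X=x) = P(Y¹=y₁, Y⁰=y₀ | X=x) · P(A=a | X=x) for all y₁, y₀, a; (overlap) 0 < P(A=1|X=x) < 1; and (nondegeneracy) 0 < P(Yᵃ=1|X=x) < 1 for a ∈ {0,1}. Then the geometric odds ratio is identified: exp( E[ log( [P(Y¹=1|X)/P(Y¹=0|X)] / [P(Y⁰=1|X)/P(Y⁰=0|X)] ) ] ) = exp( E[ logit(μ₁(X)) − logit(μ₀(X)) ] ), where μ_a(x) = P(Y=1|A=a,X=x) and logit(t) = log(t/(1−t)). -/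
/-!
Within a stratum `X = x`, summing the ignorability factorization over the other potential outcome
gives `Yᵃ ⊥ A | X = x`; together with consistency this identifies
`μ_a(x) = P(Y = 1 | A = a, X = x)` with `P(Yᵃ = 1 | X = x)`, and overlap keeps `μ_a(x)` a genuine
ratio. As `P(Yᵃ = 0 | X = x) = 1 - P(Yᵃ = 1 | X = x)`, the log of the causal odds ratio at `x` is
then `logit μ₁(x) - logit μ₀(x)`, so the two sums agree term by term.
-/

open MeasureTheory

theorem log_odds_ratio_eq_logit_sub {p q : ℝ} (hp₀ : p ≠ 0) (hp₁ : p ≠ 1) (hq₀ : q ≠ 0)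
    (hq₁ : q ≠ 1) : Real.log ((p / (1 - p)) / (q / (1 - q))) = logit p - logit q :=
  Real.log_div (div_ne_zero hp₀ (sub_ne_zero.2 hp₁.symm)) (div_ne_zero hq₀ (sub_ne_zero.2 hq₁.symm))

theorem mul_eq_mul_of_div_eq_div_mul_div {s t u c : ℝ} (hc : c ≠ 0)
    (h : s / c = t / c * (u / c)) : s * c = t * u := by
  field_simp at h
  linarith

section Stratum

variable {Ω : Type*} [MeasurableSpace Ω] (P : Measure Ω)

theorem observed_mean_eq_potential_mean {A Y Ya : Ω → Bool} {p : Ω → Prop} {a : Bool}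
    (hconsistency : ∀ ω, A ω = a → Y ω = Ya ω)
    (hA : (P {ω | A ω = a ∧ p ω}).toReal ≠ 0) (hp : (P {ω | p ω}).toReal ≠ 0)
    (hindep : (P {ω | Ya ω = true ∧ A ω = a ∧ p ω}).toReal * (P {ω | p ω}).toReal =
      (P {ω | Ya ω = true ∧ p ω}).toReal * (P {ω | A ω = a ∧ p ω}).toReal) :
    (P {ω | Y ω = true ∧ A ω = a ∧ p ω}).toReal / (P {ω | A ω = a ∧ p ω}).toReal =
      (P {ω | Ya ω = true ∧ p ω}).toReal / (P {ω | p ω}).toReal := by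
  have hset : {ω | Y ω = true ∧ A ω = a ∧ p ω} = {ω | Ya ω = true ∧ A ω = a ∧ p ω} := by
    ext ω
    simp only [Set.mem_ofPred_eq, and_congr_left_iff]
    exact fun ⟨hAω, _⟩ => by rw [hconsistency ω hAω]
  rw [hset, div_eq_div_iff hA hp, hindep]

variable [IsFiniteMeasure P]

theorem toReal_measure_true_add_false {B : Ω → Bool} (hB : Measurable B) (p : Ω → Prop) :
    (P {ω | B ω = true ∧ p ω}).toReal + (P {ω | B ω = false ∧ p ω}).toReal =
      (P {ω | p ω}).toReal := by
  have htrue : {ω | B ω = true ∧ p ω} = {ω | p ω} ∩ B ⁻¹' {true} := by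
    ext ω
    simp [and_comm]
  have hfalse : {ω | B ω = false ∧ p ω} = {ω | p ω} \ B ⁻¹' {true} := by
    ext ω
    simp [and_comm]
  rw [htrue, hfalse, ← ENNReal.toReal_add (measure_ne_top _ _) (measure_ne_top _ _),
    measure_inter_add_sdiff _ (hB (measurableSet_singleton true))]

theorem toReal_measure_false_div_eq_one_sub {B : Ω → Bool} (hB : Measurable B)
    {p : Ω → Prop} (hp : (P {ω | p ω}).toReal ≠ 0) :
    (P {ω | B ω = false ∧ p ω}).toReal / (P {ω | p ω}).toReal =
      1 - (P {ω | B ω = true ∧ p ω}).toReal / (P {ω | p ω}).toReal := by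
  rw [eq_sub_iff_add_eq, ← add_div, add_comm, toReal_measure_true_add_false P hB, div_self hp]

theorem toReal_measure_and_ne_zero_of_overlap {B : Ω → Bool} (hB : Measurable B)
    {p : Ω → Prop} (hp : (P {ω | p ω}).toReal ≠ 0)
    (hoverlap : 0 < (P {ω | B ω = true ∧ p ω}).toReal / (P {ω | p ω}).toReal ∧
      (P {ω | B ω = true ∧ p ω}).toReal / (P {ω | p ω}).toReal < 1) (b : Bool) :
    (P {ω | B ω = b ∧ p ω}).toReal ≠ 0 := by
  suffices (P {ω | B ω = b ∧ p ω}).toReal / (P {ω | p ω}).toReal ≠ 0 from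
    (div_ne_zero_iff.1 this).1
  cases b
  · rw [toReal_measure_false_div_eq_one_sub P hB hp]
    linarith [hoverlap.2]
  · exact hoverlap.1.ne'

theorem toReal_measure_mul_eq_of_forall_bool {B : Ω → Bool} (hB : Measurable B)
    {p q : Ω → Prop} {c d : ℝ}
    (h : ∀ b, (P {ω | B ω = b ∧ p ω}).toReal * c = (P {ω | B ω = b ∧ q ω}).toReal * d) :
    (P {ω | p ω}).toReal * c = (P {ω | q ω}).toReal * d := by
  rw [← toReal_measure_true_add_false P hB p, ← toReal_measure_true_add_false P hB q, add_mul,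
    add_mul, h true, h false]

end Stratum

theorem geometric_odds_ratio_identified_general
    {Ω : Type*} [MeasurableSpace Ω] (P : Measure Ω) [IsProbabilityMeasure P]
    {𝒳 : Type*} [Fintype 𝒳]
    (X : Ω → 𝒳) (A : Ω → Bool) (Y0 Y1 Y : Ω → Bool)
    (hA : Measurable A) (hY0 : Measurable Y0) (hY1 : Measurable Y1)
    (hconsistency : ∀ ω, Y ω = if A ω then Y1 ω else Y0 ω)
    (hignorability : ∀ x : 𝒳, 0 < (P {ω | X ω = x}).toReal →
      ∀ y1 y0 a : Bool,
        (P {ω | Y1 ω = y1 ∧ Y0 ω = y0 ∧ A ω = a ∧ X ω = x}).toReal /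
            (P {ω | X ω = x}).toReal =
          ((P {ω | Y1 ω = y1 ∧ Y0 ω = y0 ∧ X ω = x}).toReal / (P {ω | X ω = x}).toReal) *
            ((P {ω | A ω = a ∧ X ω = x}).toReal / (P {ω | X ω = x}).toReal))
    (hoverlap : ∀ x : 𝒳, 0 < (P {ω | X ω = x}).toReal →
      0 < (P {ω | A ω = true ∧ X ω = x}).toReal / (P {ω | X ω = x}).toReal ∧
      (P {ω | A ω = true ∧ X ω = x}).toReal / (P {ω | X ω = x}).toReal < 1)
    (hnondeg1 : ∀ x : 𝒳, 0 < (P {ω | X ω = x}).toReal →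
      0 < (P {ω | Y1 ω = true ∧ X ω = x}).toReal / (P {ω | X ω = x}).toReal ∧
      (P {ω | Y1 ω = true ∧ X ω = x}).toReal / (P {ω | X ω = x}).toReal < 1)
    (hnondeg0 : ∀ x : 𝒳, 0 < (P {ω | X ω = x}).toReal →
      0 < (P {ω | Y0 ω = true ∧ X ω = x}).toReal / (P {ω | X ω = x}).toReal ∧
      (P {ω | Y0 ω = true ∧ X ω = x}).toReal / (P {ω | X ω = x}).toReal < 1) :
    Real.exp (∑ x : 𝒳, (P {ω | X ω = x}).toReal *
      Real.log (
        (((P {ω | Y1 ω = true ∧ X ω = x}).toReal / (P {ω | X ω = x}).toReal) /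
            ((P {ω | Y1 ω = false ∧ X ω = x}).toReal / (P {ω | X ω = x}).toReal)) /
          (((P {ω | Y0 ω = true ∧ X ω = x}).toReal / (P {ω | X ω = x}).toReal) /
            ((P {ω | Y0 ω = false ∧ X ω = x}).toReal / (P {ω | X ω = x}).toReal)))) =
    Real.exp (∑ x : 𝒳, (P {ω | X ω = x}).toReal *
      (logit ((P {ω | Y ω = true ∧ A ω = true ∧ X ω = x}).toReal /
          (P {ω | A ω = true ∧ X ω = x}).toReal) -
        logit ((P {ω | Y ω = true ∧ A ω = false ∧ X ω = x}).toReal /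
          (P {ω | A ω = false ∧ X ω = x}).toReal))) := by
  congr 1
  refine Finset.sum_congr rfl fun x _ => ?_
  rcases (ENNReal.toReal_nonneg (a := P {ω | X ω = x})).eq_or_lt with hx | hx
  · simp [← hx]
  have hxne := hx.ne'
  have hA_ne_zero := toReal_measure_and_ne_zero_of_overlap P hA hxne (hoverlap x hx)
  have hfactor := fun y1 y0 a =>
    mul_eq_mul_of_div_eq_div_mul_div hxne (hignorability x hx y1 y0 a)
  have hindep1 := toReal_measure_mul_eq_of_forall_bool P hY0
    (p := fun ω => Y1 ω = true ∧ A ω = true ∧ X ω = x) fun y0 => by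
      simpa only [and_left_comm] using hfactor true y0 true
  have hindep0 := toReal_measure_mul_eq_of_forall_bool P hY1 fun y1 => hfactor y1 true false
  obtain ⟨hp₀, hp₁⟩ := hnondeg1 x hx
  obtain ⟨hq₀, hq₁⟩ := hnondeg0 x hx
  rw [observed_mean_eq_potential_mean P (fun ω h => by simp [hconsistency, h])
      (hA_ne_zero true) hxne hindep1,
    observed_mean_eq_potential_mean P (fun ω h => by simp [hconsistency, h])
      (hA_ne_zero false) hxne hindep0,
    toReal_measure_false_div_eq_one_sub P hY1 hxne,
    toReal_measure_false_div_eq_one_sub P hY0 hxne,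
    log_odds_ratio_eq_logit_sub hp₀.ne' hp₁.ne hq₀.ne' hq₁.ne]

/-- On a probability space `(Ω, P)` with covariate `X` valued in a finite set `𝒳`,
binary treatment `A`, potential outcomes `Y⁰, Y¹` (`true = 1`, `false = 0`), and observed outcome
`Y = A·Y¹ + (1−A)·Y⁰` (consistency), assume for every `x` with `P(X=x) > 0`: ignorability,
overlap, and nondegeneracy.  Then the geometric odds ratio is identified:
`exp(E[log OR(X)]) = exp(E[logit(μ₁(X)) − logit(μ₀(X))])`, where `OR(x)` is the causal
conditional odds ratio and `μ_a(x) = P(Y=1|A=a,X=x)`.  Expectations over `X` are written as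
sums over `x ∈ 𝒳` weighted by `P(X=x)`; conditional probabilities are ratios. -/
theorem geometric_odds_ratio_identified
    {Ω : Type*} [MeasurableSpace Ω] (P : Measure Ω) [IsProbabilityMeasure P]
    {𝒳 : Type*} [Fintype 𝒳] [Nonempty 𝒳] [MeasurableSpace 𝒳] [MeasurableSingletonClass 𝒳]
    (X : Ω → 𝒳) (A : Ω → Bool) (Y0 Y1 Y : Ω → Bool)
    (hX : Measurable X) (hA : Measurable A) (hY0 : Measurable Y0) (hY1 : Measurable Y1)
    (hconsistency : ∀ ω, Y ω = if A ω then Y1 ω else Y0 ω)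
    (hignorability : ∀ x : 𝒳, 0 < (P {ω | X ω = x}).toReal →
      ∀ y1 y0 a : Bool,
        (P {ω | Y1 ω = y1 ∧ Y0 ω = y0 ∧ A ω = a ∧ X ω = x}).toReal /
            (P {ω | X ω = x}).toReal =
          ((P {ω | Y1 ω = y1 ∧ Y0 ω = y0 ∧ X ω = x}).toReal / (P {ω | X ω = x}).toReal) *
            ((P {ω | A ω = a ∧ X ω = x}).toReal / (P {ω | X ω = x}).toReal))
    (hoverlap : ∀ x : 𝒳, 0 < (P {ω | X ω = x}).toReal →
      0 < (P {ω | A ω = true ∧ X ω = x}).toReal / (P {ω | X ω = x}).toReal ∧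
      (P {ω | A ω = true ∧ X ω = x}).toReal / (P {ω | X ω = x}).toReal < 1)
    (hnondeg1 : ∀ x : 𝒳, 0 < (P {ω | X ω = x}).toReal →
      0 < (P {ω | Y1 ω = true ∧ X ω = x}).toReal / (P {ω | X ω = x}).toReal ∧
      (P {ω | Y1 ω = true ∧ X ω = x}).toReal / (P {ω | X ω = x}).toReal < 1)
    (hnondeg0 : ∀ x : 𝒳, 0 < (P {ω | X ω = x}).toReal →
      0 < (P {ω | Y0 ω = true ∧ X ω = x}).toReal / (P {ω | X ω = x}).toReal ∧
      (P {ω | Y0 ω = true ∧ X ω = x}).toReal / (P {ω | X ω = x}).toReal < 1) :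
    Real.exp (∑ x : 𝒳, (P {ω | X ω = x}).toReal *
      Real.log (
        (((P {ω | Y1 ω = true ∧ X ω = x}).toReal / (P {ω | X ω = x}).toReal) /
            ((P {ω | Y1 ω = false ∧ X ω = x}).toReal / (P {ω | X ω = x}).toReal)) /
          (((P {ω | Y0 ω = true ∧ X ω = x}).toReal / (P {ω | X ω = x}).toReal) /
            ((P {ω | Y0 ω = false ∧ X ω = x}).toReal / (P {ω | X ω = x}).toReal)))) =
    Real.exp (∑ x : 𝒳, (P {ω | X ω = x}).toReal *
      (logit ((P {ω | Y ω = true ∧ A ω = true ∧ X ω = x}).toReal /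
          (P {ω | A ω = true ∧ X ω = x}).toReal) -
        logit ((P {ω | Y ω = true ∧ A ω = false ∧ X ω = x}).toReal /
          (P {ω | A ω = false ∧ X ω = x}).toReal))) :=
  geometric_odds_ratio_identified_general P X A Y0 Y1 Y hA hY0 hY1 hconsistency hignorability
    hoverlap hnondeg1 hnondeg0
end
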